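/- arXiv:1811.05610 — 3 statements merged into one kernel-verified Lean document; each statement's English description precedes it below -/
import Mathlib

section
/- Let α ∈ (0,2), s ∈ ℝ with s ≠ 0, x ∈ ℝ, and let φ : ℝ → ℝ be twice continuously differentiable with φ, φ′, φ″ bounded. Then the function y ↦ φ(x+sy) − φ(x) − s y φ′(x) 1_{{|y|<1}}(y) is ν^α-integrable, and ∫_{ℝ∖{0}} [φ(x+sy) − φ(x) − s y φ′(x) 1_{{|y|<1}}(y)] ν^α(dy) = |s|^α ∫_{ℝ∖{0}} [φ(x+z) − φ(x) − z φ′(x) 1_{{|z|<1}}(z)] ν^α(dz). -/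
open MeasureTheory Real Set Filter Topology

/-- The constant `c(1,α) = α Γ((1+α)/2) / (2^{1-α} π^{1/2} Γ(1-α/2))`. -/
noncomputable def c1 (α : ℝ) : ℝ :=
  α * Real.Gamma ((1 + α) / 2) / (2 ^ (1 - α) * Real.sqrt π * Real.Gamma (1 - α / 2))

/-- The Lévy measure `ν^α(dz) = c(1,α) |z|^{-1-α} dz` on `ℝ ∖ {0}`. -/
noncomputable def nuSym (α : ℝ) : Measure ℝ :=
  (volume.restrict {(0:ℝ)}ᶜ).withDensity fun z => ENNReal.ofReal (c1 α * |z| ^ (-(1 + α)))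

/-!
Substituting `z = s y` turns `ν^α(dy)` into `|s|^α ν^α(dz)`, since the density `|y|^{-1-α}` is
homogeneous, and turns the truncation `1_{|y|<1}` into `1_{|z|<|s|}`. Moving the truncation radius
back to `1` changes the integrand by the odd function `z φ'(x) (1_{|z|<1} - 1_{|z|<|s|})`, whose
integral vanishes because `ν^α` is symmetric. All integrands are `O(min(z², 1))` (Taylor's
formula near `0`, boundedness of `φ` away from it), and `min(z², 1)` is `ν^α`-integrable for
`0 < α < 2`.
-/

lemma integrable_of_integrableOn_Ioi_of_even {E : Type*} [NormedAddCommGroup E] {f : ℝ → E}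
    (heven : ∀ x, f (-x) = f x) (hf : IntegrableOn f (Ioi 0)) : Integrable f := by
  rw [← integrableOn_univ, ← Iic_union_Ioi (a := (0:ℝ)), integrableOn_union,
    integrableOn_Iic_iff_integrableOn_Iio]
  refine ⟨?_, hf⟩
  rw [← (Measure.measurePreserving_neg (volume : Measure ℝ)).integrableOn_comp_preimage
    (Homeomorph.neg ℝ).measurableEmbedding]
  simpa [Function.comp_def, heven] using hf

lemma integrable_min_sq_one_mul_abs_rpow {α : ℝ} (hα : α ∈ Ioo 0 2) :
    Integrable fun z : ℝ => min (z ^ 2) 1 * |z| ^ (-(1 + α)) := by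
  refine integrable_of_integrableOn_Ioi_of_even (fun z => by simp) ?_
  rw [← Ioc_union_Ioi_eq_Ioi zero_le_one, integrableOn_union]
  constructor
  · have hsmall : IntegrableOn (fun z : ℝ => z ^ (1 - α)) (Ioc 0 1) :=
      (intervalIntegrable_iff_integrableOn_Ioc_of_le zero_le_one).1
        (intervalIntegral.intervalIntegrable_rpow' (r := 1 - α) (by linarith [hα.2]))
    refine hsmall.congr_fun (fun z hz => ?_) measurableSet_Ioc
    have hz0 : 0 < z := hz.1
    rw [min_eq_left (by nlinarith [hz.2]), abs_of_pos hz0, ← Real.rpow_natCast,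
      ← Real.rpow_add hz0]
    beta_reduce
    congr 1
    push_cast
    ring
  · refine (integrableOn_Ioi_rpow_of_lt (a := -(1 + α)) (by linarith [hα.1]) zero_lt_one)
      |>.congr_fun (fun z hz => ?_) measurableSet_Ioi
    have hz1 : (1:ℝ) < z := hz
    rw [min_eq_right (by nlinarith), one_mul, abs_of_pos (zero_lt_one.trans hz1)]

lemma c1_pos {α : ℝ} (hα : α ∈ Ioo 0 2) : 0 < c1 α := by
  obtain ⟨hα0, hα2⟩ := hα
  unfold c1
  have := Real.Gamma_pos_of_pos (show 0 < (1 + α) / 2 by linarith)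
  have := Real.Gamma_pos_of_pos (show 0 < 1 - α / 2 by linarith)
  have := Real.sqrt_pos.2 Real.pi_pos
  positivity

namespace nuSym

noncomputable def density (α z : ℝ) : ENNReal := ENNReal.ofReal (c1 α * |z| ^ (-(1 + α)))

lemma eq_withDensity (α : ℝ) : nuSym α = volume.withDensity (density α) := by
  rw [nuSym, show (volume : Measure ℝ).restrict {0}ᶜ = volume by simp]; rfl

lemma ofReal_abs_rpow_mul_density_mul {α s : ℝ} (hs : s ≠ 0) (y : ℝ) :
    ENNReal.ofReal (|s| ^ (1 + α)) * density α (s * y) = density α y := by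
  have hcancel : |s| ^ (1 + α) * |s| ^ (-(1 + α)) = 1 := by
    rw [← Real.rpow_add (abs_pos.2 hs), add_neg_cancel, Real.rpow_zero]
  rw [density, density, ← ENNReal.ofReal_mul (by positivity), abs_mul,
    Real.mul_rpow (abs_nonneg s) (abs_nonneg y)]
  congr 1
  linear_combination (c1 α * |y| ^ (-(1 + α))) * hcancel

lemma map_mul_left {α s : ℝ} (hs : s ≠ 0) :
    (nuSym α).map (s * ·) = ENNReal.ofReal (|s| ^ α) • nuSym α := by
  ext A hA
  have hpre : MeasurableSet ((s * ·) ⁻¹' A) := measurable_const_mul s hA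
  have hind : ((s * ·) ⁻¹' A).indicator (density α)
      = fun y => ENNReal.ofReal (|s| ^ (1 + α)) * A.indicator (density α) (s * y) := by
    ext y
    by_cases hy : s * y ∈ A
    · rw [indicator_of_mem (show y ∈ (s * ·) ⁻¹' A from hy), indicator_of_mem hy,
        ofReal_abs_rpow_mul_density_mul hs]
    · simp [indicator_of_notMem (show y ∉ (s * ·) ⁻¹' A from hy), indicator_of_notMem hy]
  have hcomp : ∫⁻ y, A.indicator (density α) (s * y) =
      ENNReal.ofReal |s⁻¹| * ∫⁻ z, A.indicator (density α) z := by
    rw [← smul_eq_mul, ← lintegral_smul_measure, ← Real.map_volume_mul_left hs]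
    exact (lintegral_map_equiv _ (Homeomorph.mulLeft₀ s hs).toMeasurableEquiv).symm
  have hpow :
      ENNReal.ofReal (|s| ^ (1 + α)) * ENNReal.ofReal |s⁻¹| = ENNReal.ofReal (|s| ^ α) := by
    rw [← ENNReal.ofReal_mul (by positivity), abs_inv, Real.rpow_add (abs_pos.2 hs),
      Real.rpow_one]
    field_simp
  rw [Measure.map_apply (measurable_const_mul s) hA, Measure.smul_apply, eq_withDensity,
    withDensity_apply _ hA, withDensity_apply _ hpre, ← lintegral_indicator hpre,
    ← lintegral_indicator hA, hind, lintegral_const_mul' _ _ ENNReal.ofReal_ne_top, hcomp,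
    ← mul_assoc, hpow, smul_eq_mul]

variable {E : Type*} [NormedAddCommGroup E]

lemma integrable_comp_mul_left_iff {α s : ℝ} (hs : s ≠ 0) {F : ℝ → E} :
    Integrable (fun y => F (s * y)) (nuSym α) ↔ Integrable F (nuSym α) := by
  rw [← Function.comp_def, ← (measurableEmbedding_mulLeft₀ hs).integrable_map_iff,
    map_mul_left hs]
  exact integrable_smul_measure (by simpa using Real.rpow_pos_of_pos (abs_pos.2 hs) α)
    ENNReal.ofReal_ne_top

lemma integral_comp_mul_left [NormedSpace ℝ E] {α s : ℝ} (hs : s ≠ 0) (F : ℝ → E) :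
    ∫ y, F (s * y) ∂(nuSym α) = |s| ^ α • ∫ z, F z ∂(nuSym α) := by
  rw [← (measurableEmbedding_mulLeft₀ hs).integral_map, map_mul_left hs, integral_smul_measure,
    ENNReal.toReal_ofReal (by positivity)]

lemma integral_eq_zero_of_odd {α : ℝ} {F : ℝ → ℝ} (hF : ∀ z, F (-z) = -F z) :
    ∫ z, F z ∂(nuSym α) = 0 := by
  have h := integral_comp_mul_left (α := α) (neg_ne_zero.2 one_ne_zero) F
  simp only [neg_one_mul, hF, integral_neg, abs_neg, abs_one, Real.one_rpow, one_smul] at h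
  linarith

lemma integrable_min_sq_one {α : ℝ} (hα : α ∈ Ioo 0 2) :
    Integrable (fun z : ℝ => min (z ^ 2) 1) (nuSym α) := by
  have hmeas : Measurable (density α) := by unfold density; fun_prop
  rw [eq_withDensity,
    integrable_withDensity_iff hmeas (ae_of_all _ fun _ => ENNReal.ofReal_lt_top)]
  refine ((integrable_min_sq_one_mul_abs_rpow hα).const_mul (c1 α)).congr
    (ae_of_all _ fun z => ?_)
  dsimp only [density]
  rw [ENNReal.toReal_ofReal (by have := c1_pos hα; positivity)]
  ring

lemma integrable_of_abs_le {α : ℝ} (hα : α ∈ Ioo 0 2) {F : ℝ → ℝ} (hF : Measurable F)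
    {K : ℝ} (hFK : ∀ z, |F z| ≤ K * min (z ^ 2) 1) : Integrable F (nuSym α) :=
  ((integrable_min_sq_one hα).const_mul K).mono' hF.aestronglyMeasurable (ae_of_all _ hFK)

end nuSym

lemma abs_sub_sub_mul_deriv_le {φ : ℝ → ℝ} (hφ : ContDiff ℝ 2 φ) {C : ℝ}
    (hC : ∀ y, |deriv (deriv φ) y| ≤ C) (x z : ℝ) :
    |φ (x + z) - φ x - z * deriv φ x| ≤ C * z ^ 2 := by
  have hφ1 : Differentiable ℝ φ := hφ.differentiable (by norm_num)
  have hφ2 : Differentiable ℝ (deriv φ) := (hφ.iterate_deriv' 1 1).differentiable one_ne_zero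
  have hlip : ∀ t, |deriv φ (x + t) - deriv φ x| ≤ C * |t| := fun t => by
    simpa using Convex.norm_image_sub_le_of_norm_deriv_le (fun u _ => hφ2 u)
      (fun u _ => hC u) convex_univ (mem_univ x) (mem_univ (x + t))
  have hderiv : ∀ t, HasDerivAt (fun t => φ (x + t) - t * deriv φ x)
      (deriv φ (x + t) - deriv φ x) t := fun t => by
    simpa using (hφ1 (x + t)).hasDerivAt.comp_const_add x t |>.fun_sub
      ((hasDerivAt_id t).mul_const (deriv φ x))
  have hmvt := Convex.norm_image_sub_le_of_norm_hasDerivWithin_le (s := Icc (-|z|) |z|)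
    (fun t _ => (hderiv t).hasDerivWithinAt)
    (fun t ht => (hlip t).trans (mul_le_mul_of_nonneg_left (abs_le.2 ⟨ht.1, ht.2⟩)
      ((abs_nonneg _).trans (hC 0))))
    (convex_Icc (-|z|) |z|) (x := 0) (y := z) (by simp) (by simp [neg_abs_le, le_abs_self])
  calc |φ (x + z) - φ x - z * deriv φ x| ≤ C * |z| * |z| := by
        simpa [sub_right_comm] using hmvt
    _ = C * z ^ 2 := by rw [mul_assoc, abs_mul_abs_self, sq]

lemma abs_sub_sub_mul_deriv_indicator_le {φ : ℝ → ℝ} (hφ : ContDiff ℝ 2 φ) {C : ℝ}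
    (hφC : ∀ y, |φ y| ≤ C) (hC : ∀ y, |deriv (deriv φ) y| ≤ C) (x z : ℝ) :
    |φ (x + z) - φ x - z * deriv φ x * (if |z| < 1 then 1 else 0)|
      ≤ 2 * C * min (z ^ 2) 1 := by
  by_cases hz : |z| < 1
  · have hz2 : z ^ 2 ≤ 1 := by nlinarith [sq_abs z, abs_nonneg z]
    rw [if_pos hz, mul_one, min_eq_left hz2]
    have hC0 : 0 ≤ C := (abs_nonneg _).trans (hφC 0)
    nlinarith [abs_sub_sub_mul_deriv_le hφ hC x z, sq_nonneg z]
  · have hz2 : 1 ≤ z ^ 2 := by nlinarith [sq_abs z, not_lt.1 hz]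
    rw [if_neg hz, mul_zero, sub_zero, min_eq_right hz2, mul_one]
    linarith [abs_sub (φ (x + z)) (φ x), hφC (x + z), hφC x]

lemma abs_mul_indicator_sub_indicator_le {r : ℝ} (hr : 0 < r) (z : ℝ) :
    |z * ((if |z| < 1 then 1 else 0) - (if |z| < r then 1 else 0))|
      ≤ (r + r⁻¹) * min (z ^ 2) 1 := by
  have hmin : 0 ≤ min (z ^ 2) 1 := le_min (sq_nonneg z) zero_le_one
  split_ifs with h1 hr'
  · simpa using mul_nonneg (by positivity) hmin
  · have hz2 : z ^ 2 ≤ 1 := by nlinarith [sq_abs z, abs_nonneg z]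
    rw [sub_zero, mul_one, min_eq_left hz2]
    have : r * |z| ≤ z ^ 2 := by nlinarith [sq_abs z, abs_nonneg z, not_lt.1 hr']
    have : |z| ≤ r⁻¹ * z ^ 2 := by rw [inv_mul_eq_div, le_div_iff₀ hr]; linarith
    nlinarith [sq_nonneg z]
  · have hz2 : 1 ≤ z ^ 2 := by nlinarith [sq_abs z, not_lt.1 h1]
    rw [zero_sub, mul_neg_one, abs_neg, min_eq_right hz2, mul_one]
    linarith [inv_pos.2 hr]
  · simpa using mul_nonneg (by positivity) hmin

/-- scaling identity for the compensated jump integrand: for `s ≠ 0` and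
`φ ∈ C²` bounded with bounded first and second derivatives, the integrand is
`ν^α`-integrable and
`∫ [φ(x+sy) - φ(x) - syφ'(x)1_{|y|<1}] ν^α(dy)
  = |s|^α ∫ [φ(x+z) - φ(x) - zφ'(x)1_{|z|<1}] ν^α(dz)`. -/
theorem stmt_2 (α s x : ℝ) (hα : α ∈ Set.Ioo (0:ℝ) 2) (hs : s ≠ 0)
    (φ : ℝ → ℝ) (hφ : ContDiff ℝ 2 φ)
    (C : ℝ) (hbd : ∀ y, |φ y| ≤ C ∧ |deriv φ y| ≤ C ∧ |deriv (deriv φ) y| ≤ C) :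
    Integrable
      (fun y => φ (x + s * y) - φ x - s * y * deriv φ x * (if |y| < 1 then (1:ℝ) else 0))
      (nuSym α) ∧
    ∫ y, (φ (x + s * y) - φ x - s * y * deriv φ x * (if |y| < 1 then (1:ℝ) else 0)) ∂(nuSym α)
      = |s| ^ α *
        ∫ z, (φ (x + z) - φ x - z * deriv φ x * (if |z| < 1 then (1:ℝ) else 0)) ∂(nuSym α) := by
  have hind : ∀ r : ℝ, Measurable fun z : ℝ => if |z| < r then (1:ℝ) else 0 := fun r =>
    Measurable.ite (measurableSet_lt measurable_abs measurable_const) measurable_const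
      measurable_const
  have hφm : Measurable φ := hφ.continuous.measurable
  set f : ℝ → ℝ := fun z => φ (x + z) - φ x - z * deriv φ x * (if |z| < 1 then 1 else 0)
  -- the change of truncation radius from `1` to `|s|`, an odd function
  set h : ℝ → ℝ := fun z =>
    deriv φ x * (z * ((if |z| < 1 then 1 else 0) - (if |z| < |s| then 1 else 0)))
  have hf : Integrable f (nuSym α) := nuSym.integrable_of_abs_le hα (by fun_prop)
    (abs_sub_sub_mul_deriv_indicator_le hφ (fun y => (hbd y).1) (fun y => (hbd y).2.2) x)
  have hh : Integrable h (nuSym α) := nuSym.integrable_of_abs_le hα (by fun_prop) fun z => by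
    rw [abs_mul, mul_assoc]
    exact mul_le_mul_of_nonneg_left
      (abs_mul_indicator_sub_indicator_le (abs_pos.2 hs) z) (abs_nonneg _)
  have hh_zero : ∫ z, h z ∂(nuSym α) = 0 := nuSym.integral_eq_zero_of_odd fun z => by
    simp only [h, abs_neg]; ring
  have hscale : ∀ y : ℝ, (|s * y| < |s|) = (|y| < 1) := fun y => by
    rw [abs_mul, mul_lt_iff_lt_one_right (abs_pos.2 hs)]
  have hsplit : (fun y => φ (x + s * y) - φ x - s * y * deriv φ x * (if |y| < 1 then 1 else 0))
      = fun y => (f + h) (s * y) := funext fun y => by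
    simp only [Pi.add_apply, f, h, hscale]; ring
  rw [hsplit, nuSym.integrable_comp_mul_left_iff hs, nuSym.integral_comp_mul_left hs,
    integral_add' hf hh, hh_zero, add_zero, smul_eq_mul]
  exact ⟨hf.add hh, rfl⟩
end

section
/- (Key CFL inequality.) Let α ∈ (0,2), let J ≥ 2 be an integer, h = 1/J, x_j = jh, let M̃ > 0 and let σ : ℝ → ℝ satisfy |σ(x)| ≤ M̃ for all x; set c(x) := c(1,α)|σ(x)|^α. Suppose Δt > 0 satisfies Δt/h^α ≤ 1/( 2 M̃^α c(1,α) (1 + 1/α − ζ(α−1)) ), where ζ is the analytically continued Riemann zeta function. Then for every integer j with |j| < J, L̂_j := −2Δt c(x_j) ζ(α−1) h^{−α} + (c(x_j)Δt/α)[(1+x_j)^{−α} + (1−x_j)^{−α}] + c(x_j) Δt h ∑″_{k=−J−j, k≠0}^{J−j} |kh|^{−1−α} ≤ 1, where ∑″ denotes the sum in which the two end terms k = −J−j and k = J−j are given weight 1/2. -/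
open MeasureTheory Real Set Filter Topology Finset

/-- The (real value of the) analytically continued Riemann zeta function at a real point. -/
noncomputable def zetaR (x : ℝ) : ℝ := (riemannZeta (x : ℂ)).re

/-!
With `Q = J + j` and `P = J - j` one has `1 + x_j = Q h` and `1 - x_j = P h`, so `L̂_j` is
`c(x_j) Δt h^{-α}` times `-2ζ(α-1) + (Q^{-α} + P^{-α})/α + ∑″ |k|^{-1-α}`. Dropping the half
weights, the sum splits into `∑_{k=1}^{Q}` and `∑_{k=1}^{P}`, and by the mean value theorem
`k^{-1-α} ≤ ((k-1)^{-α} - k^{-α})/α` for `k ≥ 2`, so `∑_{k=1}^{N} k^{-1-α} + N^{-α}/α` telescopes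
to at most `1 + 1/α`. Hence `L̂_j ≤ 2 M̃^α c(1,α) (1 + 1/α - ζ(α-1)) Δt/h^α ≤ 1`.
-/

lemma c1_pos_s15 {α : ℝ} (hα₀ : 0 < α) (hα₂ : α < 2) : 0 < c1 α := by
  have hΓ₁ : 0 < Real.Gamma ((1 + α) / 2) := Real.Gamma_pos_of_pos (by linarith)
  have hΓ₂ : 0 < Real.Gamma (1 - α / 2) := Real.Gamma_pos_of_pos (by linarith)
  have hπ : 0 < Real.sqrt π := Real.sqrt_pos.mpr pi_pos
  unfold c1
  positivity

/-- The derivative `-α x ^ (-(1 + α))` of `x ↦ x ^ (-α)` has its smallest absolute value on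
`[a, b]` at `b`. -/
lemma mul_sub_mul_rpow_neg_le_rpow_neg_sub {α a b : ℝ} (hα : 0 ≤ α) (ha : 0 < a)
    (hab : a < b) : α * (b - a) * b ^ (-(1 + α)) ≤ a ^ (-α) - b ^ (-α) := by
  have hderiv : ∀ x ∈ Ioo a b, HasDerivAt (fun y : ℝ => y ^ (-α)) (-α * x ^ (-α - 1)) x :=
    fun x hx => hasDerivAt_rpow_const (Or.inl (ha.trans hx.1).ne')
  have hcont : ContinuousOn (fun y : ℝ => y ^ (-α)) (Set.Icc a b) := fun x hx =>
    (continuousAt_rpow_const x (-α) (Or.inl (ha.trans_le hx.1).ne')).continuousWithinAt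
  obtain ⟨c, hc, hslope⟩ := exists_hasDerivAt_eq_slope _ _ hab hcont hderiv
  have hmono : b ^ (-α - 1) ≤ c ^ (-α - 1) :=
    rpow_le_rpow_of_nonpos (ha.trans hc.1) hc.2.le (by linarith)
  rw [eq_div_iff (sub_ne_zero.mpr hab.ne')] at hslope
  rw [show -(1 + α) = -α - 1 by ring]
  nlinarith [mul_le_mul_of_nonneg_left hmono (mul_nonneg hα (sub_pos.mpr hab).le)]

/-- The discrete analogue of `∫₁^N x ^ (-(1 + α)) dx + N ^ (-α) / α = 1 / α`. -/
lemma sum_Icc_rpow_neg_add_div_le {α : ℝ} (hα : 0 < α) {N : ℤ} (hN : 1 ≤ N) :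
    ∑ k ∈ Finset.Icc (1 : ℤ) N, (k : ℝ) ^ (-(1 + α)) + (N : ℝ) ^ (-α) / α
      ≤ 1 + 1 / α := by
  induction N, hN using Int.leInduction with
  | base => simp
  | succ n hn ih =>
    have hn' : (1 : ℝ) ≤ n := by exact_mod_cast hn
    have hstep := mul_sub_mul_rpow_neg_le_rpow_neg_sub hα.le (by linarith : (0 : ℝ) < n)
      (lt_add_one (n : ℝ))
    rw [← Finset.insert_Icc_right_eq_Icc_add_one (by omega), sum_insert (by simp)]
    push_cast
    rw [add_sub_cancel_left, mul_one, ← le_div_iff₀' hα, sub_div] at hstep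
    linarith

lemma sum_Icc_erase_zero_eq {Q P : ℤ} (hQ : 0 ≤ Q) (hP : 0 ≤ P) (f : ℤ → ℝ) :
    ∑ k ∈ (Finset.Icc (-Q) P).erase 0, f k
      = ∑ k ∈ Finset.Icc 1 Q, f (-k) + ∑ k ∈ Finset.Icc 1 P, f k := by
  have hsplit : (Finset.Icc (-Q) P).erase 0 = Finset.Icc (-Q) (-1) ∪ Finset.Icc 1 P := by
    ext k
    simp only [Finset.mem_erase, Finset.mem_Icc, Finset.mem_union]
    omega
  have hdisj : Disjoint (Finset.Icc (-Q) (-1)) (Finset.Icc 1 P) := by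
    rw [Finset.disjoint_left]
    intro k hk hk'
    simp only [Finset.mem_Icc] at hk hk'
    omega
  rw [hsplit, sum_union hdisj]
  congr 1
  refine sum_nbij' (fun k => -k) (fun k => -k) ?_ ?_ ?_ ?_ ?_ <;> intro k hk <;>
    simp_all only [Finset.mem_Icc, neg_neg] <;> omega

lemma sum_Icc_erase_zero_abs_rpow_neg_add_le {α : ℝ} (hα : 0 < α) {Q P : ℤ} (hQ : 1 ≤ Q)
    (hP : 1 ≤ P) :
    ∑ k ∈ (Finset.Icc (-Q) P).erase 0, |(k : ℝ)| ^ (-(1 + α))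
      + ((Q : ℝ) ^ (-α) + (P : ℝ) ^ (-α)) / α ≤ 2 * (1 + 1 / α) := by
  have habs : ∀ k ∈ Finset.Icc (1 : ℤ) Q,
      |((-k : ℤ) : ℝ)| ^ (-(1 + α)) = (k : ℝ) ^ (-(1 + α)) := by
    intro k hk
    have hk₀ : (0 : ℝ) ≤ k := by exact_mod_cast (Finset.mem_Icc.mp hk).1.trans' zero_le_one
    rw [Int.cast_neg, abs_neg, abs_of_nonneg hk₀]
  have habs' : ∀ k ∈ Finset.Icc (1 : ℤ) P,
      |(k : ℝ)| ^ (-(1 + α)) = (k : ℝ) ^ (-(1 + α)) := by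
    intro k hk
    have hk₀ : (0 : ℝ) ≤ k := by exact_mod_cast (Finset.mem_Icc.mp hk).1.trans' zero_le_one
    rw [abs_of_nonneg hk₀]
  rw [sum_Icc_erase_zero_eq (by omega) (by omega), sum_congr rfl habs, sum_congr rfl habs',
    add_div]
  linarith [sum_Icc_rpow_neg_add_div_le hα hQ, sum_Icc_rpow_neg_add_div_le hα hP]

lemma sum_ite_half_mul_abs_mul_rpow_le (s : Finset ℤ) (a b : ℤ) {h : ℝ} (hh : 0 < h)
    (p : ℝ) :
    ∑ k ∈ s, (if k = a ∨ k = b then (1 / 2 : ℝ) else 1) * |(k : ℝ) * h| ^ p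
      ≤ h ^ p * ∑ k ∈ s, |(k : ℝ)| ^ p := by
  rw [mul_sum]
  refine sum_le_sum fun k _ => ?_
  rw [abs_mul, abs_of_pos hh, mul_rpow (abs_nonneg _) hh.le, mul_comm (h ^ p)]
  have hw : (if k = a ∨ k = b then (1 / 2 : ℝ) else 1) ≤ 1 := by split_ifs <;> norm_num
  exact mul_le_of_le_one_left (by positivity) hw

lemma rpow_neg_add_div_add_mul_sum_half_weighted_le {α h : ℝ} (hα : 0 < α) (hh : 0 < h)
    {Q P : ℤ} (hQ : 1 ≤ Q) (hP : 1 ≤ P) :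
    (((Q : ℝ) * h) ^ (-α) + ((P : ℝ) * h) ^ (-α)) / α
      + h * ∑ k ∈ (Finset.Icc (-Q) P).erase 0,
          (if k = -Q ∨ k = P then (1 / 2 : ℝ) else 1) * |(k : ℝ) * h| ^ (-(1 + α))
      ≤ 2 * (1 + 1 / α) * h ^ (-α) := by
  have hQ₀ : (0 : ℝ) ≤ Q := by exact_mod_cast hQ.trans' zero_le_one
  have hP₀ : (0 : ℝ) ≤ P := by exact_mod_cast hP.trans' zero_le_one
  have hh_rpow : h * h ^ (-(1 + α)) = h ^ (-α) := by
    rw [show -(1 + α) = -α - 1 by ring, rpow_sub hh, rpow_one]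
    field_simp
  calc _ ≤ ((Q : ℝ) ^ (-α) * h ^ (-α) + (P : ℝ) ^ (-α) * h ^ (-α)) / α
          + h * (h ^ (-(1 + α))
            * ∑ k ∈ (Finset.Icc (-Q) P).erase 0, |(k : ℝ)| ^ (-(1 + α))) := by
        rw [mul_rpow hQ₀ hh.le, mul_rpow hP₀ hh.le]
        gcongr
        exact sum_ite_half_mul_abs_mul_rpow_le _ _ _ hh _
    _ = (∑ k ∈ (Finset.Icc (-Q) P).erase 0, |(k : ℝ)| ^ (-(1 + α))
          + ((Q : ℝ) ^ (-α) + (P : ℝ) ^ (-α)) / α) * h ^ (-α) := by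
        rw [← mul_assoc, hh_rpow]
        ring
    _ ≤ 2 * (1 + 1 / α) * h ^ (-α) := by
        gcongr
        exact sum_Icc_erase_zero_abs_rpow_neg_add_le hα hQ hP

theorem stmt_15_general (α : ℝ) (hα : α ∈ Set.Ioo (0:ℝ) 2)
    (J : ℤ) (h : ℝ) (hh : h = 1 / (J : ℝ))
    (Mt : ℝ) (σ : ℝ → ℝ) (hσ : ∀ x, |σ x| ≤ Mt)
    (Δt : ℝ) (hΔt : 0 < Δt)
    (hCFL : Δt / h ^ α ≤ 1 / (2 * Mt ^ α * c1 α * (1 + 1 / α - zetaR (α - 1))))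
    (j : ℤ) (hj : |j| < J) :
    -2 * Δt * (c1 α * |σ ((j : ℝ) * h)| ^ α) * zetaR (α - 1) * h ^ (-α)
      + (c1 α * |σ ((j : ℝ) * h)| ^ α) * Δt / α *
          ((1 + (j : ℝ) * h) ^ (-α) + (1 - (j : ℝ) * h) ^ (-α))
      + (c1 α * |σ ((j : ℝ) * h)| ^ α) * Δt * h *
          ∑ k ∈ (Finset.Icc (-J - j) (J - j)).erase 0,
            (if k = -J - j ∨ k = J - j then (1/2 : ℝ) else 1) * |(k : ℝ) * h| ^ (-(1 + α))
      ≤ 1 := by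
  obtain ⟨hα₀, hα₂⟩ := hα
  obtain ⟨hQ, hP⟩ : 1 ≤ J + j ∧ 1 ≤ J - j := by constructor <;> linarith [abs_lt.mp hj]
  have hJ : (0 : ℝ) < J := by exact_mod_cast (by omega : (0 : ℤ) < J)
  have hh₀ : 0 < h := by rw [hh]; positivity
  have hx₁ : 1 + (j : ℝ) * h = ((J + j : ℤ) : ℝ) * h := by rw [hh]; push_cast; field_simp
  have hx₂ : 1 - (j : ℝ) * h = ((J - j : ℤ) : ℝ) * h := by rw [hh]; push_cast; field_simp
  have hK := rpow_neg_add_div_add_mul_sum_half_weighted_le hα₀ hh₀ hQ hP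
  rw [hx₁, hx₂, show -J - j = -(J + j) by ring]
  have hc1 := c1_pos_s15 hα₀ hα₂
  set c := c1 α * |σ ((j : ℝ) * h)| ^ α
  set B := 1 + 1 / α - zetaR (α - 1)
  have hc : c ≤ c1 α * Mt ^ α :=
    mul_le_mul_of_nonneg_left (rpow_le_rpow (abs_nonneg _) (hσ _) hα₀.le) hc1.le
  -- with `Δt > 0`, the CFL condition forces its right-hand side, hence `B`, to be positive
  have hD : 0 < 2 * Mt ^ α * c1 α * B :=
    one_div_pos.mp ((div_pos hΔt (rpow_pos_of_pos hh₀ α)).trans_le hCFL)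
  have hB : 0 < B := pos_of_mul_pos_right hD <| by
    have := (abs_nonneg _).trans (hσ 0)
    positivity
  calc _ ≤ c * Δt * (-2 * zetaR (α - 1) * h ^ (-α) + 2 * (1 + 1 / α) * h ^ (-α)) := by
        linear_combination (c * Δt) * hK
    _ = Δt * h ^ (-α) * c * (2 * B) := by ring
    _ ≤ Δt * h ^ (-α) * (c1 α * Mt ^ α) * (2 * B) := by gcongr
    _ = Δt / h ^ α * (2 * Mt ^ α * c1 α * B) := by rw [rpow_neg hh₀.le]; ring
    _ ≤ 1 := (le_div_iff₀ hD).mp hCFL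

/-- key CFL inequality: under the CFL condition
`Δt/h^α ≤ 1/(2M̃^α c(1,α)(1 + 1/α - ζ(α-1)))`, for every `|j| < J` the quantity
`L̂_j = -2Δt c(x_j)ζ(α-1)h^{-α} + (c(x_j)Δt/α)[(1+x_j)^{-α}+(1-x_j)^{-α}]
  + c(x_j)Δt h ∑″_{k=-J-j,k≠0}^{J-j} |kh|^{-1-α}`
is at most `1`, where `c(x) = c(1,α)|σ(x)|^α` and the two end terms of the sum carry
weight `1/2`. -/
theorem stmt_15 (α : ℝ) (hα : α ∈ Set.Ioo (0:ℝ) 2)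
    (J : ℤ) (hJ : 2 ≤ J) (h : ℝ) (hh : h = 1 / (J : ℝ))
    (Mt : ℝ) (hMt : 0 < Mt) (σ : ℝ → ℝ) (hσ : ∀ x, |σ x| ≤ Mt)
    (Δt : ℝ) (hΔt : 0 < Δt)
    (hCFL : Δt / h ^ α ≤ 1 / (2 * Mt ^ α * c1 α * (1 + 1 / α - zetaR (α - 1))))
    (j : ℤ) (hj : |j| < J) :
    -2 * Δt * (c1 α * |σ ((j : ℝ) * h)| ^ α) * zetaR (α - 1) * h ^ (-α)
      + (c1 α * |σ ((j : ℝ) * h)| ^ α) * Δt / α *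
          ((1 + (j : ℝ) * h) ^ (-α) + (1 - (j : ℝ) * h) ^ (-α))
      + (c1 α * |σ ((j : ℝ) * h)| ^ α) * Δt * h *
          ∑ k ∈ (Finset.Icc (-J - j) (J - j)).erase 0,
            (if k = -J - j ∨ k = J - j then (1/2 : ℝ) else 1) * |(k : ℝ) * h| ^ (-(1 + α))
      ≤ 1 :=
  stmt_15_general α hα J h hh Mt σ hσ Δt hΔt hCFL j hj
end

section
/- (Proposition: discrete maximum principle for the absorbing boundary condition, f = g = 0.) Let α ∈ (0,2), J ≥ 2 an integer, h = 1/J, x_j = jh, M̃ > 0, σ : ℝ → ℝ with |σ(x)| ≤ M̃ for all x, c(x) := c(1,α)|σ(x)|^α, and M > 0. Suppose Δt > 0 satisfies the CFL condition Δt/h^α ≤ 1/( 2 M̃^α c(1,α) (1 + 1/α − ζ(α−1)) ). Let (U^n_j)_{|j|≤J} satisfy 0 ≤ U^n_j ≤ M for |j| < J and U^n_j = 0 for |j| = J, and for |j| < J define the explicit Euler update U^{n+1}_j := U^n_j − Δt c(x_j) ζ(α−1) h^{−α} (U^n_{j+1} − 2U^n_j + U^n_{j−1}) − (c(x_j)Δt/α)[(1+x_j)^{−α}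 + (1−x_j)^{−α}] U^n_j + c(x_j) Δt h ∑″_{k=−J−j, k≠0}^{J−j} (U^n_{j+k} − U^n_j) |kh|^{−1−α}, where ∑″ gives weight 1/2 to the two end terms k = −J−j and k = J−j. Then 0 ≤ U^{n+1}_j ≤ M for every |j| < J; i.e., the scheme satisfies the discrete maximum principle. -/
open MeasureTheory Real Set Filter Topology Finset

/-!
The update is a combination `(1 - d - ∑ aₖ) Uⱼ + ∑ aₖ U_{j+k}` of old values with weights
`aₖ ≥ 0` and `d ≥ 0`, so it stays in `[0, M]` as soon as `d + ∑ aₖ ≤ 1`. The weights of the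
neighbours `j ± 1` pick up `-Δt c(x_j) ζ(α - 1) h^{-α}`, which is nonnegative because `ζ < 0` on
`(-1, 1)`. Comparing `∑_{k=1}^{N} k^{-1-α}` with `1 + ∫₁^N x^{-1-α} dx` bounds the jump part of
the outflow at `x_j` by `(2 + 2/α) h^{-α}` minus exactly the killing term, so the total outflow
is at most `2 c(x_j) (1 + 1/α - ζ(α - 1)) h^{-α}`, which the CFL condition bounds by `1 / Δt`.

On `(0, 1)`, `ζ < 0` comes from the identity
`1 - (s - 1) ζ(s) = ∑ₙ ((1 - s)(n+1)^{-s} - ∫_{n+1}^{n+2} (1 - s) x^{-s} dx)`: it holds for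
`Re s > 1`, both sides are holomorphic on `Re s > 0`, and for real `s ∈ (0, 1)` the sum is at most
`1 - s`. On `(-1, 0)` it comes from the functional equation, and `ζ(0) = -1/2`.
-/

lemma rpow_add_one_le_div {r x : ℝ} (hr : r ≤ 0) (hr1 : r ≠ -1) (hx : 0 < x) :
    (x + 1) ^ r ≤ ((x + 1) ^ (r + 1) - x ^ (r + 1)) / (r + 1) := by
  have h0 : (0 : ℝ) ∉ Set.uIcc x (x + 1) := by
    rw [Set.uIcc_of_le (by linarith)]; exact fun h => hx.not_ge h.1
  calc (x + 1) ^ r = ∫ _ in x..x + 1, (x + 1) ^ r := by simp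
    _ ≤ ∫ t in x..x + 1, t ^ r :=
        intervalIntegral.integral_mono_on (by linarith) intervalIntegrable_const
          (intervalIntegral.intervalIntegrable_rpow (Or.inr h0))
          fun t ht => rpow_le_rpow_of_nonpos (hx.trans_le ht.1) ht.2 hr
    _ = _ := integral_rpow (Or.inr ⟨hr1, h0⟩)

lemma sum_Icc_abs_rpow_le {α : ℝ} (hα : 0 < α) {N : ℤ} (hN : 1 ≤ N) :
    ∑ k ∈ Finset.Icc 1 N, |(k : ℝ)| ^ (-(1 + α)) ≤ 1 + (1 - (N : ℝ) ^ (-α)) / α := by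
  induction N, hN using Int.leInduction with
  | base => simp
  | succ N hN ih =>
    have hstep := rpow_add_one_le_div (r := -(1 + α)) (by linarith) (by linarith)
      (show (0 : ℝ) < N by exact_mod_cast hN)
    rw [show -(1 + α) + 1 = -α by ring] at hstep
    rw [← Finset.insert_Icc_right_eq_Icc_add_one (by omega), sum_insert (by simp),
      Int.cast_add, Int.cast_one, abs_of_pos (by positivity)]
    have htelescope : ((N + 1 : ℝ) ^ (-α) - (N : ℝ) ^ (-α)) / -α =
        (1 - (N + 1 : ℝ) ^ (-α)) / α - (1 - (N : ℝ) ^ (-α)) / α := by field_simp; ring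
    linarith

lemma sum_Icc_erase_zero_abs_rpow_add_le {α : ℝ} (hα : 0 < α) {P Q : ℤ} (hP : 1 ≤ P)
    (hQ : 1 ≤ Q) :
    ∑ k ∈ (Finset.Icc (-P) Q).erase 0, |(k : ℝ)| ^ (-(1 + α)) +
      ((P : ℝ) ^ (-α) + (Q : ℝ) ^ (-α)) / α ≤ 2 + 2 / α := by
  have hsplit : (Finset.Icc (-P) Q).erase 0 =
      (Finset.Icc 1 P).map (Equiv.neg ℤ).toEmbedding ∪ Finset.Icc 1 Q := by
    ext k; simp; omega
  rw [hsplit, sum_union (by rw [Finset.disjoint_left]; simp; omega), sum_map]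
  simp only [Equiv.toEmbedding_apply, Equiv.neg_apply, Int.cast_neg, abs_neg]
  have hPsum := sum_Icc_abs_rpow_le hα hP
  have hQsum := sum_Icc_abs_rpow_le hα hQ
  have hcancel : (1 - (P : ℝ) ^ (-α)) / α + (1 - (Q : ℝ) ^ (-α)) / α +
      ((P : ℝ) ^ (-α) + (Q : ℝ) ^ (-α)) / α = 2 / α := by ring
  linarith

lemma summable_nat_add_one_rpow {p : ℝ} (hp : p < -1) :
    Summable fun n : ℕ => ((n : ℝ) + 1) ^ p := by
  simpa using (summable_nat_add_iff 1).2 (Real.summable_nat_rpow.2 hp)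

lemma hasDerivAt_ofReal_cpow {x : ℝ} (hx : 0 < x) (c : ℂ) :
    HasDerivAt (fun y : ℝ => (y : ℂ) ^ c) (c * (x : ℂ) ^ (c - 1)) x :=
  (Complex.hasStrictDerivAt_cpow_const (Complex.ofReal_mem_slitPlane.2 hx)).hasDerivAt.comp_ofReal

lemma norm_ofReal_cpow_neg_sub_le {s : ℂ} (hs : -1 ≤ s.re) {a x : ℝ} (ha : 0 < a)
    (hax : a ≤ x) :
    ‖(x : ℂ) ^ (-s) - (a : ℂ) ^ (-s)‖ ≤ ‖s‖ * a ^ (-s.re - 1) * (x - a) := by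
  have hderiv : ∀ y ∈ Set.Icc a x, HasDerivWithinAt (fun y : ℝ => (y : ℂ) ^ (-s))
      (-s * (y : ℂ) ^ (-s - 1)) (Set.Icc a x) y :=
    fun y hy => (hasDerivAt_ofReal_cpow (ha.trans_le hy.1) _).hasDerivWithinAt
  have hbound : ∀ y ∈ Set.Icc a x, ‖-s * (y : ℂ) ^ (-s - 1)‖ ≤ ‖s‖ * a ^ (-s.re - 1) := by
    intro y hy
    rw [norm_mul, norm_neg, Complex.norm_cpow_eq_rpow_re_of_pos (ha.trans_le hy.1)]
    gcongr
    exact rpow_le_rpow_of_nonpos ha hy.1 (by simp; linarith)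
  simpa [Real.norm_eq_abs, abs_of_nonneg (sub_nonneg.2 hax)] using
    (convex_Icc a x).norm_image_sub_le_of_norm_hasDerivWithin_le hderiv hbound
      (left_mem_Icc.2 hax) (right_mem_Icc.2 hax)

noncomputable def zetaRemainderTerm (n : ℕ) (s : ℂ) : ℂ :=
  (1 - s) * ((n : ℂ) + 1) ^ (-s) - (((n : ℂ) + 2) ^ (1 - s) - ((n : ℂ) + 1) ^ (1 - s))

lemma norm_zetaRemainderTerm_le (n : ℕ) {s : ℂ} (hs : -1 ≤ s.re) :
    ‖zetaRemainderTerm n s‖ ≤ ‖1 - s‖ * ‖s‖ * ((n : ℝ) + 1) ^ (-s.re - 1) := by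
  set a : ℝ := n + 1
  have ha : 0 < a := by positivity
  set ψ : ℝ → ℂ := fun y => (1 - s) * (a : ℂ) ^ (-s) * y - (y : ℂ) ^ (1 - s)
  have hderiv : ∀ y ∈ Set.Icc a (a + 1), HasDerivWithinAt ψ
      ((1 - s) * ((a : ℂ) ^ (-s) - (y : ℂ) ^ (-s))) (Set.Icc a (a + 1)) y := by
    intro y hy
    have := ((hasDerivAt_id y).ofReal_comp.const_mul ((1 - s) * (a : ℂ) ^ (-s))).sub
      (hasDerivAt_ofReal_cpow (ha.trans_le hy.1) (1 - s))
    refine (this.congr_deriv ?_).hasDerivWithinAt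
    rw [sub_sub_cancel_left, Complex.ofReal_one]
    ring
  have hbound : ∀ y ∈ Set.Icc a (a + 1),
      ‖(1 - s) * ((a : ℂ) ^ (-s) - (y : ℂ) ^ (-s))‖ ≤ ‖1 - s‖ * (‖s‖ * a ^ (-s.re - 1)) := by
    intro y hy
    rw [norm_mul, norm_sub_rev ((a : ℂ) ^ (-s))]
    gcongr
    calc _ ≤ ‖s‖ * a ^ (-s.re - 1) * (y - a) := norm_ofReal_cpow_neg_sub_le hs ha hy.1
      _ ≤ _ := mul_le_of_le_one_right (by positivity) (by linarith [hy.2])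
  have hT : zetaRemainderTerm n s = ψ (a + 1) - ψ a := by
    simp only [zetaRemainderTerm, ψ, a]; push_cast; ring_nf
  rw [hT, mul_assoc]
  simpa using (convex_Icc a (a + 1)).norm_image_sub_le_of_norm_hasDerivWithin_le hderiv hbound
    (left_mem_Icc.2 (by linarith)) (right_mem_Icc.2 (by linarith))

lemma summable_norm_zetaRemainderTerm {s : ℂ} (hs : 0 < s.re) :
    Summable fun n => ‖zetaRemainderTerm n s‖ :=
  ((summable_nat_add_one_rpow (by linarith : -s.re - 1 < -1)).mul_left _).of_nonneg_of_le
    (fun _ => norm_nonneg _) fun n => norm_zetaRemainderTerm_le n (by linarith)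

lemma tendsto_nat_add_one_cpow_atTop {s : ℂ} (hs : s.re < 0) :
    Tendsto (fun N : ℕ => ((N : ℂ) + 1) ^ s) atTop (𝓝 0) := by
  rw [tendsto_zero_iff_norm_tendsto_zero]
  have hlim := (tendsto_rpow_neg_atTop (neg_pos.2 hs)).comp
    (tendsto_atTop_add_const_right _ 1 tendsto_natCast_atTop_atTop)
  refine hlim.congr fun N => ?_
  rw [Function.comp_apply, neg_neg, ← Complex.norm_cpow_eq_rpow_re_of_pos (by positivity)]
  push_cast; rfl

lemma hasSum_zetaRemainderTerm {s : ℂ} (hs : 1 < s.re) :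
    HasSum (zetaRemainderTerm · s) (1 - riemannZeta₁ s) := by
  have hs1 : s ≠ 1 := fun h => by simp [h] at hs
  have hzeta : HasSum (fun n : ℕ => ((n : ℂ) + 1) ^ (-s)) (riemannZeta s) := by
    have hsum : Summable fun n : ℕ => 1 / ((n : ℂ) + 1) ^ s := by
      simpa using (summable_nat_add_iff 1).2 (Complex.summable_one_div_nat_cpow.2 hs)
    simpa [zeta_eq_tsum_one_div_nat_add_one_cpow hs, Complex.cpow_neg] using hsum.hasSum
  have hpartial : ∀ N, ∑ n ∈ range N, zetaRemainderTerm n s =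
      (1 - s) * ∑ n ∈ range N, ((n : ℂ) + 1) ^ (-s) - (((N : ℂ) + 1) ^ (1 - s) - 1) := by
    intro N
    have := sum_range_sub (fun n : ℕ => ((n : ℂ) + 1) ^ (1 - s)) N
    simp only [Nat.cast_add_one, add_assoc, one_add_one_eq_two, Nat.cast_zero, zero_add,
      Complex.one_cpow] at this
    rw [← this, mul_sum, ← sum_sub_distrib]; rfl
  have hZ₁ : riemannZeta₁ s = (s - 1) * riemannZeta s := by
    rw [riemannZeta_eq_inv_sub_mul hs1, ← mul_assoc, mul_inv_cancel₀ (sub_ne_zero.2 hs1), one_mul]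
  rw [(Summable.of_norm (summable_norm_zetaRemainderTerm (by linarith))).hasSum_iff_tendsto_nat,
    funext hpartial, hZ₁,
    show 1 - (s - 1) * riemannZeta s = (1 - s) * riemannZeta s - (0 - 1) by ring]
  exact (hzeta.tendsto_sum_nat.const_mul _).sub
    ((tendsto_nat_add_one_cpow_atTop (by simp; linarith)).sub_const 1)

lemma differentiable_zetaRemainderTerm (n : ℕ) : Differentiable ℂ (zetaRemainderTerm n) := by
  have h1 : (n : ℂ) + 1 ≠ 0 := Nat.cast_add_one_ne_zero n
  have h2 : (n : ℂ) + 2 ≠ 0 := by exact_mod_cast (by omega : n + 2 ≠ 0)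
  unfold zetaRemainderTerm
  fun_prop (disch := exact Or.inl ‹_›)

lemma differentiableOn_tsum_zetaRemainderTerm :
    DifferentiableOn ℂ (fun s => ∑' n, zetaRemainderTerm n s) {s | 0 < s.re} := by
  intro s₀ hs₀
  set δ := s₀.re / 2
  have hδ : 0 < δ := half_pos hs₀
  set R := ‖s₀‖ + 1
  set V := {s : ℂ | δ < s.re} ∩ Metric.ball 0 R
  have hV : IsOpen V :=
    (isOpen_lt continuous_const Complex.continuous_re).inter Metric.isOpen_ball
  have hs₀V : s₀ ∈ V := ⟨show δ < s₀.re from half_lt_self hs₀, by simp [R]⟩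
  refine (Complex.differentiableOn_tsum_of_summable_norm
    ((summable_nat_add_one_rpow (by linarith : -δ - 1 < -1)).mul_left ((1 + R) * R))
    (fun n => (differentiable_zetaRemainderTerm n).differentiableOn) hV
    fun n s hs => ?_).differentiableAt (hV.mem_nhds hs₀V) |>.differentiableWithinAt
  have hsδ : δ < s.re := hs.1
  have hsR : ‖s‖ ≤ R := (mem_ball_zero_iff.1 hs.2).le
  calc _ ≤ ‖1 - s‖ * ‖s‖ * ((n : ℝ) + 1) ^ (-s.re - 1) :=
        norm_zetaRemainderTerm_le n (by linarith)
    _ ≤ (1 + R) * R * ((n : ℝ) + 1) ^ (-δ - 1) := by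
        gcongr
        · exact (norm_sub_le _ _).trans (by simpa using hsR)
        · exact_mod_cast Nat.le_add_left 1 n

lemma tsum_zetaRemainderTerm {s : ℂ} (hs : 0 < s.re) :
    ∑' n, zetaRemainderTerm n s = 1 - riemannZeta₁ s := by
  have hopen : IsOpen {s : ℂ | 0 < s.re} := isOpen_lt continuous_const Complex.continuous_re
  have hanalytic := differentiableOn_tsum_zetaRemainderTerm.analyticOnNhd hopen
  refine hanalytic.eqOn_of_preconnected_of_eventuallyEq
    ((differentiable_riemannZeta₁.const_sub 1).differentiableOn.analyticOnNhd hopen)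
    (convex_halfSpace_re_gt 0).isPreconnected (z₀ := 2) (by simp) ?_ hs
  filter_upwards [(isOpen_lt continuous_const Complex.continuous_re).mem_nhds
    (by simp : (2 : ℂ) ∈ {s : ℂ | 1 < s.re})] with s hs
  exact (hasSum_zetaRemainderTerm hs).tsum_eq

lemma re_zetaRemainderTerm_ofReal_le (n : ℕ) {t : ℝ} (ht0 : 0 ≤ t) (ht1 : t < 1) :
    (zetaRemainderTerm n t).re ≤ (1 - t) * (((n : ℝ) + 1) ^ (-t) - ((n : ℝ) + 2) ^ (-t)) := by
  have hreal : zetaRemainderTerm n t = (((1 - t) * ((n : ℝ) + 1) ^ (-t) -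
      (((n : ℝ) + 2) ^ (1 - t) - ((n : ℝ) + 1) ^ (1 - t)) : ℝ) : ℂ) := by
    rw [zetaRemainderTerm]
    push_cast [Complex.ofReal_cpow (by positivity : (0 : ℝ) ≤ n + 1),
      Complex.ofReal_cpow (by positivity : (0 : ℝ) ≤ n + 2)]
    rfl
  have hstep :=
    rpow_add_one_le_div (r := -t) (x := n + 1) (by linarith) (by linarith) (by positivity)
  rw [le_div_iff₀ (by linarith), show -t + 1 = 1 - t by ring,
    show (n : ℝ) + 1 + 1 = n + 2 by ring] at hstep
  rw [hreal, Complex.ofReal_re]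
  nlinarith

lemma riemannZeta_re_neg_of_pos_of_lt_one {t : ℝ} (ht0 : 0 < t) (ht1 : t < 1) :
    (riemannZeta t).re < 0 := by
  have ht0' : 0 < (t : ℂ).re := by simpa using ht0
  have hsum := Complex.hasSum_re (Summable.of_norm (summable_norm_zetaRemainderTerm ht0')).hasSum
  rw [tsum_zetaRemainderTerm ht0'] at hsum
  set u : ℕ → ℝ := fun n => (1 - t) * ((n : ℝ) + 1) ^ (-t)
  have hle : (1 - riemannZeta₁ t).re ≤ 1 - t := by
    refine hsum.tsum_eq ▸ hsum.summable.tsum_le_of_sum_range_le fun N => ?_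
    calc ∑ n ∈ range N, (zetaRemainderTerm n t).re ≤ ∑ n ∈ range N, (u n - u (n + 1)) :=
          sum_le_sum fun n _ => by
            simpa [u, mul_sub, add_assoc, one_add_one_eq_two] using
              re_zetaRemainderTerm_ofReal_le n ht0.le ht1
      _ = u 0 - u N := sum_range_sub' u N
      _ ≤ 1 - t := by simp only [u]; norm_num; positivity
  have hZ₁ : riemannZeta t = ((t - 1)⁻¹ : ℝ) * riemannZeta₁ t := by
    rw [riemannZeta_eq_inv_sub_mul (by exact_mod_cast ht1.ne)]; push_cast; rfl
  rw [hZ₁, Complex.re_ofReal_mul]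
  refine mul_neg_of_neg_of_pos (inv_lt_zero.2 (by linarith)) ?_
  simp only [Complex.sub_re, Complex.one_re] at hle
  linarith

lemma riemannZeta_re_neg_of_neg {t : ℝ} (ht1 : -1 < t) (ht0 : t < 0) :
    (riemannZeta t).re < 0 := by
  set s : ℝ := 1 - t
  have hfe : riemannZeta t =
      ((2 * (2 * π) ^ (-s) * Real.Gamma s * Real.cos (π * s / 2) : ℝ) : ℂ) * riemannZeta s := by
    rw [show (t : ℂ) = 1 - (s : ℂ) by push_cast [s]; ring, riemannZeta_one_sub]
    · push_cast [Complex.ofReal_cpow (by positivity : (0 : ℝ) ≤ 2 * π), Complex.Gamma_ofReal]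
      rfl
    · intro n hn
      have : s = -n := by exact_mod_cast hn
      linarith [n.cast_nonneg (α := ℝ)]
    · exact_mod_cast (show s ≠ 1 by simp only [s]; linarith)
  rw [hfe, Complex.re_ofReal_mul]
  refine mul_neg_of_neg_of_pos ?_ (riemannZeta_re_pos_of_one_lt (by simp only [s]; linarith))
  have hcos : Real.cos (π * s / 2) < 0 :=
    Real.cos_neg_of_pi_div_two_lt_of_lt (by nlinarith [pi_pos]) (by nlinarith [pi_pos])
  have hΓ := Real.Gamma_pos_of_pos (show 0 < s by simp only [s]; linarith)
  have hpow := rpow_pos_of_pos (by positivity : 0 < 2 * π) (-s)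
  exact mul_neg_of_pos_of_neg (by positivity) hcos

lemma zetaR_neg {t : ℝ} (h1 : -1 < t) (h2 : t < 1) : zetaR t < 0 := by
  rcases lt_trichotomy t 0 with h | rfl | h
  · exact riemannZeta_re_neg_of_neg h1 h
  · norm_num [zetaR, riemannZeta_zero]
  · exact riemannZeta_re_neg_of_pos_of_lt_one h h2

lemma mem_Icc_sub_mul_sub_mul_add_sum {ι : Type*} (s : Finset ι) {u₀ u₁ u₂ e d M : ℝ}
    {u a : ι → ℝ} (hu₀ : u₀ ∈ Set.Icc 0 M) (hu₁ : u₁ ∈ Set.Icc 0 M) (hu₂ : u₂ ∈ Set.Icc 0 M)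
    (hu : ∀ i ∈ s, u i ∈ Set.Icc 0 M) (he : e ≤ 0) (hd : 0 ≤ d) (ha : ∀ i ∈ s, 0 ≤ a i)
    (hsum : d - 2 * e + ∑ i ∈ s, a i ≤ 1) :
    u₀ - e * (u₁ - 2 * u₀ + u₂) - d * u₀ + ∑ i ∈ s, a i * (u i - u₀) ∈ Set.Icc 0 M := by
  have hconv : u₀ - e * (u₁ - 2 * u₀ + u₂) - d * u₀ + ∑ i ∈ s, a i * (u i - u₀) =
      (1 - (d - 2 * e + ∑ i ∈ s, a i)) * u₀ + (-e) * u₁ + (-e) * u₂ + ∑ i ∈ s, a i * u i := by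
    simp only [mul_sub, sum_sub_distrib, ← sum_mul]; ring
  have hsum_nonneg : 0 ≤ ∑ i ∈ s, a i * u i :=
    sum_nonneg fun i hi => mul_nonneg (ha i hi) (hu i hi).1
  have hsum_le : ∑ i ∈ s, a i * u i ≤ (∑ i ∈ s, a i) * M := by
    rw [sum_mul]; exact sum_le_sum fun i hi => mul_le_mul_of_nonneg_left (hu i hi).2 (ha i hi)
  rw [hconv]
  constructor <;> nlinarith [hu₀.1, hu₀.2, hu₁.1, hu₁.2, hu₂.1, hu₂.2]

lemma killing_add_jump_le {α : ℝ} (hα : 0 < α) {J j : ℤ} (hj : |j| < J) {h : ℝ}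
    (hh : h = 1 / (J : ℝ)) {w : ℤ → ℝ} (hw : ∀ k, w k ≤ 1) :
    ((1 + j * h) ^ (-α) + (1 - j * h) ^ (-α)) / α +
        h * ∑ k ∈ (Finset.Icc (-J - j) (J - j)).erase 0, w k * |(k : ℝ) * h| ^ (-(1 + α))
      ≤ (2 + 2 / α) * h ^ (-α) := by
  obtain ⟨hjl, hjr⟩ := abs_lt.1 hj
  have hJ : (0 : ℝ) < J := by exact_mod_cast (by omega : (0 : ℤ) < J)
  have hh0 : 0 < h := by rw [hh]; positivity
  set K := (Finset.Icc (-J - j) (J - j)).erase 0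
  set S := ∑ k ∈ K, |(k : ℝ)| ^ (-(1 + α))
  have hshift : ∀ m : ℤ, 0 ≤ m → ((m : ℝ) * h) ^ (-α) = (m : ℝ) ^ (-α) * h ^ (-α) :=
    fun m hm => mul_rpow (by exact_mod_cast hm) hh0.le
  have hP : 1 + j * h = ((J + j : ℤ) : ℝ) * h := by rw [hh]; push_cast; field_simp
  have hQ : 1 - j * h = ((J - j : ℤ) : ℝ) * h := by rw [hh]; push_cast; field_simp
  have hjump : h * ∑ k ∈ K, w k * |(k : ℝ) * h| ^ (-(1 + α)) ≤ h ^ (-α) * S := by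
    have hh1 : h * h ^ (-(1 + α)) = h ^ (-α) := by
      rw [← rpow_one_add' hh0.le (by linarith)]; ring_nf
    have hterm : ∀ k : ℤ, w k * |(k : ℝ) * h| ^ (-(1 + α)) ≤
        h ^ (-(1 + α)) * |(k : ℝ)| ^ (-(1 + α)) := fun k => by
      rw [abs_mul, abs_of_pos hh0, mul_rpow (abs_nonneg _) hh0.le, mul_comm (_ ^ _)]
      exact mul_le_of_le_one_left (by positivity) (hw k)
    calc _ ≤ h * ∑ k ∈ K, h ^ (-(1 + α)) * |(k : ℝ)| ^ (-(1 + α)) :=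
          mul_le_mul_of_nonneg_left (sum_le_sum fun k _ => hterm k) hh0.le
      _ = _ := by rw [← mul_sum, ← mul_assoc, hh1]
  have hsum := sum_Icc_erase_zero_abs_rpow_add_le hα (P := J + j) (Q := J - j) (by omega)
    (by omega)
  rw [neg_add'] at hsum
  rw [hP, hQ, hshift _ (by omega), hshift _ (by omega)]
  calc _ ≤ (((J + j : ℤ) : ℝ) ^ (-α) * h ^ (-α) + ((J - j : ℤ) : ℝ) ^ (-α) * h ^ (-α)) / α +
        h ^ (-α) * S := by linarith
    _ = h ^ (-α) * (S + (((J + j : ℤ) : ℝ) ^ (-α) + ((J - j : ℤ) : ℝ) ^ (-α)) / α) := by ring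
    _ ≤ h ^ (-α) * (2 + 2 / α) := by gcongr
    _ = _ := by ring

lemma scheme_step_mem_Icc {α h Δt c z M : ℝ} (hα : 0 < α) {J j : ℤ} (hj : |j| < J)
    (hh : h = 1 / (J : ℝ)) (hc : 0 ≤ c) (hΔt : 0 ≤ Δt) (hz : z ≤ 0)
    (hCFL : c * Δt * h ^ (-α) * (2 * (1 + 1 / α - z)) ≤ 1) {U : ℤ → ℝ}
    (hU : ∀ i : ℤ, |i| ≤ J → U i ∈ Set.Icc 0 M) :
    U j - Δt * c * z * h ^ (-α) * (U (j + 1) - 2 * U j + U (j - 1))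
        - c * Δt / α * ((1 + (j : ℝ) * h) ^ (-α) + (1 - (j : ℝ) * h) ^ (-α)) * U j
        + c * Δt * h * ∑ k ∈ (Finset.Icc (-J - j) (J - j)).erase 0,
          (if k = -J - j ∨ k = J - j then (1/2 : ℝ) else 1) * (U (j + k) - U j) *
            |(k : ℝ) * h| ^ (-(1 + α)) ∈ Set.Icc 0 M := by
  obtain ⟨hjl, hjr⟩ := abs_lt.1 hj
  have hJ : (0 : ℝ) < J := by exact_mod_cast (abs_nonneg j).trans_lt hj
  have hh0 : 0 < h := by rw [hh]; exact one_div_pos.2 hJ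
  have hjh : |(j : ℝ) * h| < 1 := by
    rw [hh, abs_mul, abs_of_pos (one_div_pos.2 hJ), ← div_eq_mul_one_div, div_lt_one hJ]
    exact_mod_cast hj
  set K := (Finset.Icc (-J - j) (J - j)).erase 0
  set w : ℤ → ℝ := fun k => if k = -J - j ∨ k = J - j then 1 / 2 else 1
  have hw : ∀ k, w k ∈ Set.Icc 0 1 := fun k => by simp only [w]; split_ifs <;> norm_num
  have hkill : 0 ≤ c * Δt / α * ((1 + (j : ℝ) * h) ^ (-α) + (1 - (j : ℝ) * h) ^ (-α)) := by
    have h1 : 0 < 1 + (j : ℝ) * h := by linarith [neg_abs_le ((j : ℝ) * h)]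
    have h2 : 0 < 1 - (j : ℝ) * h := by linarith [le_abs_self ((j : ℝ) * h)]
    positivity
  have hsum : c * Δt / α * ((1 + (j : ℝ) * h) ^ (-α) + (1 - (j : ℝ) * h) ^ (-α)) -
      2 * (Δt * c * z * h ^ (-α)) + ∑ k ∈ K, c * Δt * h * (w k * |(k : ℝ) * h| ^ (-(1 + α)))
      ≤ 1 :=
    calc _ = c * Δt * (((1 + (j : ℝ) * h) ^ (-α) + (1 - (j : ℝ) * h) ^ (-α)) / α +
          h * ∑ k ∈ K, w k * |(k : ℝ) * h| ^ (-(1 + α))) - 2 * (Δt * c * z * h ^ (-α)) := by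
          rw [← mul_sum]; ring
      _ ≤ c * Δt * ((2 + 2 / α) * h ^ (-α)) - 2 * (Δt * c * z * h ^ (-α)) := by
          gcongr; exact killing_add_jump_le hα hj hh fun k => (hw k).2
      _ = c * Δt * h ^ (-α) * (2 * (1 + 1 / α - z)) := by ring
      _ ≤ 1 := hCFL
  have hjump : c * Δt * h * ∑ k ∈ K, w k * (U (j + k) - U j) * |(k : ℝ) * h| ^ (-(1 + α)) =
      ∑ k ∈ K, c * Δt * h * (w k * |(k : ℝ) * h| ^ (-(1 + α))) * (U (j + k) - U j) := by
    rw [mul_sum]; exact sum_congr rfl fun k _ => by ring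
  rw [hjump]
  refine mem_Icc_sub_mul_sub_mul_add_sum K (hU j hj.le) (hU _ ?_) (hU _ ?_)
    (fun k hk => hU _ ?_)
    (mul_nonpos_of_nonpos_of_nonneg (mul_nonpos_of_nonneg_of_nonpos (by positivity) hz)
      (by positivity)) hkill (fun k _ => by have := (hw k).1; positivity) hsum
  · exact abs_le.2 ⟨by omega, by omega⟩
  · exact abs_le.2 ⟨by omega, by omega⟩
  · simp only [K, mem_erase, Finset.mem_Icc] at hk
    exact abs_le.2 ⟨by omega, by omega⟩

lemma c1_nonneg {α : ℝ} (h0 : 0 < α) (h2 : α < 2) : 0 ≤ c1 α := by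
  have := Gamma_pos_of_pos (show 0 < (1 + α) / 2 by linarith)
  have := Gamma_pos_of_pos (show 0 < 1 - α / 2 by linarith)
  unfold c1
  positivity

lemma mem_Icc_of_abs_le {J : ℤ} {M : ℝ} {U : ℤ → ℝ}
    (hU : ∀ j : ℤ, |j| < J → 0 ≤ U j ∧ U j ≤ M) (hUb : ∀ j : ℤ, |j| = J → U j = 0)
    (hM : 0 ≤ M) {i : ℤ} (hi : |i| ≤ J) :
    U i ∈ Set.Icc 0 M := by
  rcases hi.lt_or_eq with hlt | heq
  · exact hU i hlt
  · rw [hUb i heq]; exact ⟨le_rfl, hM⟩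

theorem stmt_16_general (α : ℝ) (hα : α ∈ Set.Ioo (0:ℝ) 2)
    (J : ℤ) (h : ℝ) (hh : h = 1 / (J : ℝ))
    (Mt : ℝ) (σ : ℝ → ℝ) (hσ : ∀ x, |σ x| ≤ Mt)
    (M : ℝ) (Δt : ℝ) (hΔt : 0 < Δt)
    (hCFL : Δt / h ^ α ≤ 1 / (2 * Mt ^ α * c1 α * (1 + 1 / α - zetaR (α - 1))))
    (U Unext : ℤ → ℝ)
    (hU : ∀ j : ℤ, |j| < J → 0 ≤ U j ∧ U j ≤ M)
    (hUb : ∀ j : ℤ, |j| = J → U j = 0)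
    (hUnext : ∀ j : ℤ, |j| < J → Unext j =
      U j
        - Δt * (c1 α * |σ ((j : ℝ) * h)| ^ α) * zetaR (α - 1) * h ^ (-α) *
            (U (j + 1) - 2 * U j + U (j - 1))
        - (c1 α * |σ ((j : ℝ) * h)| ^ α) * Δt / α *
            ((1 + (j : ℝ) * h) ^ (-α) + (1 - (j : ℝ) * h) ^ (-α)) * U j
        + (c1 α * |σ ((j : ℝ) * h)| ^ α) * Δt * h *
            ∑ k ∈ (Finset.Icc (-J - j) (J - j)).erase 0,
              (if k = -J - j ∨ k = J - j then (1/2 : ℝ) else 1) *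
                (U (j + k) - U j) * |(k : ℝ) * h| ^ (-(1 + α))) :
    ∀ j : ℤ, |j| < J → 0 ≤ Unext j ∧ Unext j ≤ M := by
  obtain ⟨hα0, hα2⟩ := hα
  intro j hj
  have hh0 : 0 < h := by
    rw [hh]; exact one_div_pos.2 (by exact_mod_cast (abs_nonneg j).trans_lt hj)
  set z := zetaR (α - 1)
  set c := c1 α * |σ (j * h)| ^ α
  have hz : z < 0 := zetaR_neg (by linarith) (by linarith)
  have hc : c ≤ c1 α * Mt ^ α :=
    mul_le_mul_of_nonneg_left (rpow_le_rpow (abs_nonneg _) (hσ _) hα0.le) (c1_nonneg hα0 hα2)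
  have hrate : 0 ≤ Δt * h ^ (-α) * (2 * (1 + 1 / α - z)) := by
    have : 0 < 1 + 1 / α - z := by have := one_div_pos.2 hα0; linarith
    positivity
  have hCFL' : c * Δt * h ^ (-α) * (2 * (1 + 1 / α - z)) ≤ 1 :=
    calc _ = c * (Δt * h ^ (-α) * (2 * (1 + 1 / α - z))) := by ring
      _ ≤ c1 α * Mt ^ α * (Δt * h ^ (-α) * (2 * (1 + 1 / α - z))) := by gcongr
      _ = Δt / h ^ α * (2 * Mt ^ α * c1 α * (1 + 1 / α - z)) := by rw [rpow_neg hh0.le]; ring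
      _ ≤ 1 := (le_div_iff₀ (one_div_pos.1 ((by positivity : 0 < Δt / h ^ α).trans_le hCFL))).1
          (by simpa using hCFL)
  rw [hUnext j hj]
  exact scheme_step_mem_Icc hα0 hj hh (mul_nonneg (c1_nonneg hα0 hα2) (by positivity)) hΔt.le
    hz.le hCFL' fun _ => mem_Icc_of_abs_le hU hUb ((hU j hj).1.trans (hU j hj).2)

/-- discrete maximum principle, absorbing boundary, `f = g = 0`:
if `0 ≤ U^n_j ≤ M` for `|j| < J`, `U^n_j = 0` for `|j| = J`, and the CFL condition
holds, then the explicit Euler update of the modified-trapezoidal scheme satisfies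
`0 ≤ U^{n+1}_j ≤ M` for all `|j| < J`. -/
theorem stmt_16 (α : ℝ) (hα : α ∈ Set.Ioo (0:ℝ) 2)
    (J : ℤ) (hJ : 2 ≤ J) (h : ℝ) (hh : h = 1 / (J : ℝ))
    (Mt : ℝ) (hMt : 0 < Mt) (σ : ℝ → ℝ) (hσ : ∀ x, |σ x| ≤ Mt)
    (M : ℝ) (hM : 0 < M) (Δt : ℝ) (hΔt : 0 < Δt)
    (hCFL : Δt / h ^ α ≤ 1 / (2 * Mt ^ α * c1 α * (1 + 1 / α - zetaR (α - 1))))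
    (U Unext : ℤ → ℝ)
    (hU : ∀ j : ℤ, |j| < J → 0 ≤ U j ∧ U j ≤ M)
    (hUb : ∀ j : ℤ, |j| = J → U j = 0)
    (hUnext : ∀ j : ℤ, |j| < J → Unext j =
      U j
        - Δt * (c1 α * |σ ((j : ℝ) * h)| ^ α) * zetaR (α - 1) * h ^ (-α) *
            (U (j + 1) - 2 * U j + U (j - 1))
        - (c1 α * |σ ((j : ℝ) * h)| ^ α) * Δt / α *
            ((1 + (j : ℝ) * h) ^ (-α) + (1 - (j : ℝ) * h) ^ (-α)) * U j
        + (c1 α * |σ ((j : ℝ) * h)| ^ α) * Δt * h *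
            ∑ k ∈ (Finset.Icc (-J - j) (J - j)).erase 0,
              (if k = -J - j ∨ k = J - j then (1/2 : ℝ) else 1) *
                (U (j + k) - U j) * |(k : ℝ) * h| ^ (-(1 + α))) :
    ∀ j : ℤ, |j| < J → 0 ≤ Unext j ∧ Unext j ≤ M :=
  stmt_16_general α hα J h hh Mt σ hσ M Δt hΔt hCFL U Unext hU hUb hUnext
end
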